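/- (Induction step of Theorem 3.5, stated for general r) For every β ≥ β̄ (with β̄ as in the partial exactness result, i.e., any β̄ > 0 such that for all β ≥ β̄ every extreme-point optimal solution of (P_β) lies in S^opt) and every r ∈ {0,1,…,n}: any ẑ = (x̂_1,…,x̂_n) ∈ S_β^opt having exactly r indices i with x̂_i not an extreme point of Ω_i^+ belongs to S^opt. -/

import Mathlib

noncomputable section

/-- Dot product on `ℝ^m`. -/
def dotp {m : ℕ} (x y : Fin m → ℝ) : ℝ := ∑ k, x k * y k

/-- The ℓ₁ penalty term `p(z) = Σ_{i<j} ⟨x_i, x_j⟩`. -/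
def pen {n m : ℕ} (z : Fin n → Fin m → ℝ) : ℝ :=
  ∑ i : Fin n, ∑ j : Fin n, if i < j then dotp (z i) (z j) else 0

/-- `f` is multi-affine: affine in each block when the others are fixed. -/
def MultiAffine {n m : ℕ} (f : (Fin n → Fin m → ℝ) → ℝ) : Prop :=
  ∀ (i : Fin n) (z : Fin n → Fin m → ℝ) (x y : Fin m → ℝ) (t : ℝ),
    f (Function.update z i (t • x + (1 - t) • y)) =
      t * f (Function.update z i x) + (1 - t) * f (Function.update z i y)

/-- Membership in `Ω = Ω₁⁺ × ⋯ × Ωₙ⁺`. -/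
def InOmega {n m : ℕ} (Om : Fin n → Set (Fin m → ℝ)) (z : Fin n → Fin m → ℝ) : Prop :=
  ∀ i, z i ∈ Om i

/-- Feasibility for (P): `z ∈ Ω` and `⟨x_i, x_j⟩ = 0` for all `i ≠ j`. -/
def Feas {n m : ℕ} (Om : Fin n → Set (Fin m → ℝ)) (z : Fin n → Fin m → ℝ) : Prop :=
  InOmega Om z ∧ ∀ i j, i ≠ j → dotp (z i) (z j) = 0

/-- `S^opt`: global minimizers of `f` over the feasible region of (P). -/
def SOpt {n m : ℕ} (Om : Fin n → Set (Fin m → ℝ)) (f : (Fin n → Fin m → ℝ) → ℝ) :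
    Set (Fin n → Fin m → ℝ) :=
  {z | Feas Om z ∧ ∀ w, Feas Om w → f z ≤ f w}

/-- `S_β^opt`: global minimizers of `f_β = f + β p` over `Ω`. -/
def SBeta {n m : ℕ} (Om : Fin n → Set (Fin m → ℝ)) (f : (Fin n → Fin m → ℝ) → ℝ) (β : ℝ) :
    Set (Fin n → Fin m → ℝ) :=
  {z | InOmega Om z ∧ ∀ w, InOmega Om w → f z + β * pen z ≤ f w + β * pen w}

/-! Write a non-extreme block `x̂_i` of an optimal point `ẑ` of `(P_β)` as a convex combination
of the finitely many extreme points of `Ω_i⁺` (Krein–Milman). Since `f_β` is affine in `x_i`,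
Jensen's inequality together with the minimality of `ẑ` shows that replacing `x̂_i` by any
extreme point of positive weight keeps the point optimal for `(P_β)`; it has one fewer
non-extreme block, so by induction it is feasible for `(P)`. As `⟨·, x̂_k⟩` is linear, `ẑ` is
feasible as well, the penalty vanishes there, and optimality for `(P_β)` becomes optimality
for `(P)`. -/

open Function Finset

lemma Set.Finite.convexHull_extremePoints_eq {E : Type*} [AddCommGroup E] [Module ℝ E]
    [TopologicalSpace E] [T2Space E] [IsTopologicalAddGroup E] [ContinuousSMul ℝ E]
    [LocallyConvexSpace ℝ E] {s : Set E} (hscomp : IsCompact s) (hconv : Convex ℝ s)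
    (hfin : (s.extremePoints ℝ).Finite) : convexHull ℝ (s.extremePoints ℝ) = s := by
  have hKM := closure_convexHull_extremePoints hscomp hconv
  rwa [(hfin.isCompact_convexHull ℝ).isClosed.closure_eq] at hKM

lemma ConcaveOn.map_eq_of_map_sum_le {E : Type*} [AddCommGroup E] [Module ℝ E] {s : Set E}
    {g : E → ℝ} (hg : ConcaveOn ℝ s g) {ι : Type*} {t : Finset ι} {w : ι → ℝ} {p : ι → E}
    (hw₀ : ∀ j ∈ t, 0 ≤ w j) (hw₁ : ∑ j ∈ t, w j = 1) (hp : ∀ j ∈ t, p j ∈ s)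
    (hmin : ∀ j ∈ t, g (∑ k ∈ t, w k • p k) ≤ g (p j)) {j : ι} (hj : j ∈ t) (hwj : w j ≠ 0) :
    g (p j) = g (∑ k ∈ t, w k • p k) := by
  set x := ∑ k ∈ t, w k • p k
  have hjensen := hg.le_map_sum hw₀ hw₁ hp
  have hgap : ∑ k ∈ t, w k * (g (p k) - g x) = 0 := by
    refine le_antisymm ?_ (sum_nonneg fun k hk => mul_nonneg (hw₀ k hk) (sub_nonneg.2 (hmin k hk)))
    simp only [smul_eq_mul] at hjensen
    simp only [mul_sub, sum_sub_distrib, ← sum_mul, hw₁, one_mul]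
    linarith
  have hterm := (sum_eq_zero_iff_of_nonneg fun k hk =>
    mul_nonneg (hw₀ k hk) (sub_nonneg.2 (hmin k hk))).1 hgap j hj
  linarith [(mul_eq_zero.1 hterm).resolve_left hwj]

lemma dotp_eq_dotProduct {m : ℕ} (x y : Fin m → ℝ) : dotp x y = x ⬝ᵥ y := rfl

section MultiAffine

variable {n m : ℕ}

lemma MultiAffine.add {f g : (Fin n → Fin m → ℝ) → ℝ} (hf : MultiAffine f)
    (hg : MultiAffine g) : MultiAffine (fun z => f z + g z) := by
  intro i z x y t
  simp only [hf i z x y t, hg i z x y t]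
  ring

lemma MultiAffine.const_mul {f : (Fin n → Fin m → ℝ) → ℝ} (hf : MultiAffine f) (c : ℝ) :
    MultiAffine (fun z => c * f z) := by
  intro i z x y t
  simp only [hf i z x y t]
  ring

lemma dotp_update_update (z : Fin n → Fin m → ℝ) (i : Fin n) {a b : Fin n} (hab : a ≠ b)
    (x y : Fin m → ℝ) (t : ℝ) :
    dotp (update z i (t • x + (1 - t) • y) a) (update z i (t • x + (1 - t) • y) b) =
      t * dotp (update z i x a) (update z i x b) +
        (1 - t) * dotp (update z i y a) (update z i y b) := by
  simp only [dotp_eq_dotProduct]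
  rcases eq_or_ne a i with rfl | ha
  · simp only [update_self, update_of_ne hab.symm, add_dotProduct, smul_dotProduct, smul_eq_mul]
  rcases eq_or_ne b i with rfl | hb
  · simp only [update_self, update_of_ne ha, dotProduct_add, dotProduct_smul, smul_eq_mul]
  simp only [update_of_ne ha, update_of_ne hb]
  ring

lemma multiAffine_pen : MultiAffine (pen : (Fin n → Fin m → ℝ) → ℝ) := by
  intro i z x y t
  simp only [pen, mul_sum, ← sum_add_distrib]
  refine sum_congr rfl fun a _ => sum_congr rfl fun b _ => ?_
  split_ifs with hab
  · exact dotp_update_update z i hab.ne x y t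
  · ring

lemma MultiAffine.concaveOn_update {f : (Fin n → Fin m → ℝ) → ℝ} (hf : MultiAffine f)
    (z : Fin n → Fin m → ℝ) (i : Fin n) : ConcaveOn ℝ Set.univ (fun x => f (update z i x)) := by
  refine ⟨convex_univ, fun x _ y _ a b ha hb hab => ?_⟩
  obtain rfl : b = 1 - a := by linarith
  simp only [hf i z x y a, smul_eq_mul, le_refl]

end MultiAffine

section Penalty

variable {n m : ℕ} {Om : Fin n → Set (Fin m → ℝ)} {f : (Fin n → Fin m → ℝ) → ℝ} {β : ℝ}

lemma pen_eq_zero_of_feas {z : Fin n → Fin m → ℝ} (hz : Feas Om z) : pen z = 0 :=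
  sum_eq_zero fun a _ => sum_eq_zero fun b _ => by
    split_ifs with hab
    exacts [hz.2 a b hab.ne, rfl]

lemma Feas.mem_SOpt {z : Fin n → Fin m → ℝ} (hz : Feas Om z) (hβz : z ∈ SBeta Om f β) :
    z ∈ SOpt Om f := by
  refine ⟨hz, fun v hv => ?_⟩
  have := hβz.2 v hv.1
  rwa [pen_eq_zero_of_feas hz, pen_eq_zero_of_feas hv, mul_zero, add_zero, add_zero] at this

lemma InOmega.update {z : Fin n → Fin m → ℝ} (hz : InOmega Om z) {i : Fin n} {x : Fin m → ℝ}
    (hx : x ∈ Om i) : InOmega Om (update z i x) := by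
  intro j
  rcases eq_or_ne j i with rfl | hj
  · rwa [update_self]
  · rw [update_of_ne hj]
    exact hz j

variable {z : Fin n → Fin m → ℝ} {i : Fin n} {ι : Type*} {t : Finset ι} {w : ι → ℝ}
  {p : ι → Fin m → ℝ}

lemma update_mem_SBeta_of_sum_eq (hf : MultiAffine f) (hz : z ∈ SBeta Om f β)
    (hw₀ : ∀ j ∈ t, 0 ≤ w j) (hw₁ : ∑ j ∈ t, w j = 1) (hp : ∀ j ∈ t, p j ∈ Om i)
    (hzi : ∑ j ∈ t, w j • p j = z i) {j : ι} (hj : j ∈ t) (hwj : w j ≠ 0) :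
    update z i (p j) ∈ SBeta Om f β := by
  set F := fun z => f z + β * pen z
  have hF : MultiAffine F := hf.add (multiAffine_pen.const_mul β)
  have hFz : F (update z i (∑ k ∈ t, w k • p k)) = F z := by rw [hzi, update_eq_self]
  have hval : F (update z i (p j)) = F z := by
    rw [← hFz]
    refine (hF.concaveOn_update z i).map_eq_of_map_sum_le hw₀ hw₁ (fun _ _ => trivial)
      (fun k hk => ?_) hj hwj
    rw [hFz]
    exact hz.2 _ (hz.1.update (hp k hk))
  refine ⟨hz.1.update (hp j hj), fun v hv => ?_⟩
  change F (update z i (p j)) ≤ F v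
  rw [hval]
  exact hz.2 v hv

lemma feas_of_sum_eq (hz : InOmega Om z) (hw₁ : ∑ j ∈ t, w j = 1)
    (hzi : ∑ j ∈ t, w j • p j = z i) (hfeas : ∀ j ∈ t, w j ≠ 0 → Feas Om (update z i (p j))) :
    Feas Om z := by
  obtain ⟨j₀, hj₀, hwj₀⟩ := exists_ne_zero_of_sum_ne_zero (hw₁.trans_ne one_ne_zero)
  have hblock : ∀ k, k ≠ i → dotp (z i) (z k) = 0 := by
    intro k hk
    rw [← hzi, dotp_eq_dotProduct, sum_dotProduct]
    refine sum_eq_zero fun j hj => ?_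
    rcases eq_or_ne (w j) 0 with hwj | hwj
    · rw [hwj, zero_smul, zero_dotProduct]
    · have := (hfeas j hj hwj).2 i k hk.symm
      rw [update_self, update_of_ne hk] at this
      rw [smul_dotProduct, ← dotp_eq_dotProduct, this, smul_zero]
  refine ⟨hz, fun a b hab => ?_⟩
  rcases eq_or_ne a i with rfl | ha
  · exact hblock b hab.symm
  rcases eq_or_ne b i with rfl | hb
  · rw [dotp_eq_dotProduct, dotProduct_comm, ← dotp_eq_dotProduct]
    exact hblock a ha
  have := (hfeas j₀ hj₀ hwj₀).2 a b hab
  rwa [update_of_ne ha, update_of_ne hb] at this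

end Penalty

lemma ncard_nonExtreme_update_add_one {n m : ℕ} {Om : Fin n → Set (Fin m → ℝ)}
    {z : Fin n → Fin m → ℝ} {i : Fin n} (hi : z i ∉ (Om i).extremePoints ℝ)
    {e : Fin m → ℝ} (he : e ∈ (Om i).extremePoints ℝ) :
    {j | update z i e j ∉ (Om j).extremePoints ℝ}.ncard + 1 =
      {j | z j ∉ (Om j).extremePoints ℝ}.ncard := by
  have hset : {j | update z i e j ∉ (Om j).extremePoints ℝ} =
      {j | z j ∉ (Om j).extremePoints ℝ} \ {i} := by
    ext j
    rcases eq_or_ne j i with rfl | hj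
    · simp [he]
    · simp [hj]
  rw [hset, Set.ncard_sdiff_singleton_add_one hi]

theorem induction_step_general_r_general (n m : ℕ)
    (Om : Fin n → Set (Fin m → ℝ))
    (hcpt : ∀ i, IsCompact (Om i))
    (hcvx : ∀ i, Convex ℝ (Om i))
    (hfin : ∀ i, (Set.extremePoints ℝ (Om i)).Finite)
    (f : (Fin n → Fin m → ℝ) → ℝ) (hf : MultiAffine f)
    (βbar : ℝ)
    (hpartial : ∀ β ≥ βbar,
      ∀ z ∈ SBeta Om f β, (∀ i, z i ∈ Set.extremePoints ℝ (Om i)) → z ∈ SOpt Om f) :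
    ∀ β ≥ βbar, ∀ r ≤ n, ∀ zhat ∈ SBeta Om f β,
      {i : Fin n | zhat i ∉ Set.extremePoints ℝ (Om i)}.ncard = r → zhat ∈ SOpt Om f := by
  intro β hβ r _
  induction r with
  | zero =>
    intro zhat hz hc
    refine hpartial β hβ zhat hz fun i => ?_
    by_contra hi
    exact ((Set.ncard_eq_zero).1 hc).subset hi
  | succ r ih =>
    intro zhat hz hc
    obtain ⟨i, hi⟩ : {i | zhat i ∉ (Om i).extremePoints ℝ}.Nonempty :=
      (Set.ncard_pos).1 (by omega)
    have hzi : zhat i ∈ convexHull ℝ ((hfin i).toFinset : Set (Fin m → ℝ)) := by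
      rw [Set.Finite.coe_toFinset, (hfin i).convexHull_extremePoints_eq (hcpt i) (hcvx i)]
      exact hz.1 i
    obtain ⟨w, hw₀, hw₁, hwz⟩ := Finset.mem_convexHull'.1 hzi
    have hext : ∀ e ∈ (hfin i).toFinset, e ∈ (Om i).extremePoints ℝ :=
      fun e he => (hfin i).mem_toFinset.1 he
    have hopt : ∀ e ∈ (hfin i).toFinset, w e ≠ 0 → update zhat i e ∈ SOpt Om f :=
      fun e he hwe => ih (by omega) _
        (update_mem_SBeta_of_sum_eq hf hz hw₀ hw₁ (fun e he => extremePoints_subset (hext e he)) hwz he hwe)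
        (by have := ncard_nonExtreme_update_add_one hi (hext e he); omega)
    exact (feas_of_sum_eq hz.1 hw₁ hwz fun e he hwe => (hopt e he hwe).1).mem_SOpt hz

/-- Induction step of Theorem 3.5, stated for general `r`: for any `β̄ > 0` realizing
partial exactness and any `β ≥ β̄`, every `ẑ ∈ S_β^opt` with exactly `r` non-extreme
blocks belongs to `S^opt`, for each `r ∈ {0, 1, …, n}`. -/
theorem induction_step_general_r (n m : ℕ) (hn : 2 ≤ n) (hm : 1 ≤ m)
    (Om : Fin n → Set (Fin m → ℝ))
    (hne : ∀ i, (Om i).Nonempty) (hcpt : ∀ i, IsCompact (Om i))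
    (hcvx : ∀ i, Convex ℝ (Om i))
    (hnonneg : ∀ i, ∀ x ∈ Om i, ∀ k, 0 ≤ x k)
    (hfin : ∀ i, (Set.extremePoints ℝ (Om i)).Finite)
    (f : (Fin n → Fin m → ℝ) → ℝ) (hf : MultiAffine f) (hfc : Continuous f)
    (hFne : ∃ z, Feas Om z)
    (βbar : ℝ) (hβbar : 0 < βbar)
    (hpartial : ∀ β ≥ βbar,
      ∀ z ∈ SBeta Om f β, (∀ i, z i ∈ Set.extremePoints ℝ (Om i)) → z ∈ SOpt Om f) :
    ∀ β ≥ βbar, ∀ r ≤ n, ∀ zhat ∈ SBeta Om f β,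
      {i : Fin n | zhat i ∉ Set.extremePoints ℝ (Om i)}.ncard = r → zhat ∈ SOpt Om f :=
  induction_step_general_r_general n m Om hcpt hcvx hfin f hf βbar hpartial
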